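/- arXiv:math/0607103 — 4 statements merged into one kernel-verified Lean document; each statement's English description precedes it below -/
import Mathlib

section
/- For 0 < α < 1, θ with |θ| ≤ α, λ_1 = α − |θ|, and c_L = sin((α−θ)π/2)/sin(απ), c_R = sin((α+θ)π/2)/sin(απ), the two-sided series of coefficients w_k(α,θ) defined by the case formula (with central value w_0 = −(2^{1−α}λ_1 − 3λ_1 + 2)(c_L + c_R)/(2Γ(2−α)), symmetric-type values at k = ±1, and tail values w_k = −((|k|+2)^{1−α}λ_1 + (|k|+1)^{1−α}(2−3λ_1) + |k|^{1−α}(3λ_1−4) + (|k|−1)^{1−α}(2−λ_1))·c/(2Γ(2−α)) with c = c_L for k ≤ −2 and c = c_R for k ≥ 2) is absolutely summable and its total sum ∑_{k∈ℤ} w_k equals 0. -/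
open Real Filter

noncomputable def rfE (s : ℝ) (n : ℕ) : ℝ := ((n : ℝ) + 1) ^ s - (n : ℝ) ^ s

noncomputable def rfB (s : ℝ) (n : ℕ) : ℝ := rfE s n - rfE s (n + 1)

lemma rfE_nonneg {s : ℝ} (hs0 : 0 ≤ s) (n : ℕ) : 0 ≤ rfE s n :=
  sub_nonneg.2 (Real.rpow_le_rpow (by positivity) (by linarith) hs0)

lemma rfB_nonneg {s : ℝ} (hs0 : 0 < s) (hs1 : s < 1) (n : ℕ) : 0 ≤ rfB s n := by
  have hxm : (n : ℝ) ∈ Set.Ici (0:ℝ) := Set.mem_Ici.2 (by positivity)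
  have hym : ((n : ℝ) + 2) ∈ Set.Ici (0:ℝ) := Set.mem_Ici.2 (by positivity)
  have h := (Real.concaveOn_rpow hs0.le hs1.le).2 hxm hym
    (show (0:ℝ) ≤ 1/2 by norm_num) (show (0:ℝ) ≤ 1/2 by norm_num)
    (show (1/2 : ℝ) + 1/2 = 1 by norm_num)
  simp only [smul_eq_mul] at h
  have hx : (1/2 : ℝ) * (n : ℝ) + (1/2) * ((n : ℝ) + 2) = (n : ℝ) + 1 := by ring
  rw [hx] at h
  simp only [rfB, rfE]
  push_cast
  rw [show ((n:ℝ) + 1 + 1) = (n:ℝ) + 2 from by ring]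
  linarith

lemma rfE_le {s : ℝ} (hs0 : 0 < s) (hs1 : s < 1) (n : ℕ) :
    rfE s n ≤ ((n : ℝ) + 1) ^ (s - 1) := by
  have hn1 : (0 : ℝ) < (n : ℝ) + 1 := by positivity
  have hxm : (0 : ℝ) ∈ Set.Ici (0:ℝ) := Set.mem_Ici.2 le_rfl
  have hym : ((n : ℝ) + 1) ∈ Set.Ici (0:ℝ) := Set.mem_Ici.2 (by positivity)
  have h := (Real.concaveOn_rpow hs0.le hs1.le).2 hxm hym
    (show (0:ℝ) ≤ 1 / ((n : ℝ) + 1) by positivity)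
    (show (0:ℝ) ≤ (n : ℝ) / ((n : ℝ) + 1) by positivity)
    (show 1 / ((n : ℝ) + 1) + (n : ℝ) / ((n : ℝ) + 1) = 1 by field_simp; try ring)
  simp only [smul_eq_mul, mul_zero, Real.zero_rpow hs0.ne', zero_add] at h
  have hx : (n : ℝ) / ((n : ℝ) + 1) * ((n : ℝ) + 1) = (n : ℝ) := by field_simp
  rw [hx] at h
  have hsub : ((n : ℝ) + 1) ^ (s - 1) = ((n : ℝ) + 1) ^ s / ((n : ℝ) + 1) := by
    rw [Real.rpow_sub hn1, Real.rpow_one]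
  rw [hsub, rfE]
  have e2 : ((n : ℝ) + 1) ^ s - (n : ℝ) / ((n : ℝ) + 1) * ((n : ℝ) + 1) ^ s
      = ((n : ℝ) + 1) ^ s / ((n : ℝ) + 1) := by
    field_simp
    ring
  linarith [h, e2]

lemma rfE_tendsto {s : ℝ} (hs0 : 0 < s) (hs1 : s < 1) :
    Tendsto (rfE s) atTop (nhds 0) := by
  have hb : Tendsto (fun n : ℕ => ((n : ℝ) + 1) ^ (s - 1)) atTop (nhds 0) := by
    have h1 : Tendsto (fun n : ℕ => (n : ℝ) + 1) atTop atTop :=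
      tendsto_atTop_add_const_right _ 1 tendsto_natCast_atTop_atTop
    have h2 := (tendsto_rpow_neg_atTop (y := 1 - s) (by linarith)).comp h1
    simp only [Function.comp_def, show -(1-s) = s - 1 from by ring] at h2
    exact h2
  exact squeeze_zero (rfE_nonneg hs0.le) (rfE_le hs0 hs1) hb

lemma hasSum_rfB {s : ℝ} (hs0 : 0 < s) (hs1 : s < 1) : HasSum (rfB s) (rfE s 0) := by
  have hsum : Summable (rfB s) := by
    refine summable_of_sum_range_le (rfB_nonneg hs0 hs1) (c := rfE s 0) fun n => ?_
    rw [show (fun i => rfB s i) = (fun i => rfE s i - rfE s (i + 1)) from rfl,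
      Finset.sum_range_sub' (rfE s) n]
    have := rfE_nonneg hs0.le n
    linarith
  have h1 := hsum.hasSum.tendsto_sum_nat
  have h2 : Tendsto (fun n => ∑ i ∈ Finset.range n, rfB s i) atTop (nhds (rfE s 0)) := by
    have : (fun n => ∑ i ∈ Finset.range n, rfB s i)
        = fun n => rfE s 0 - rfE s n := by
      funext n; exact Finset.sum_range_sub' (rfE s) n
    rw [this]
    simpa using tendsto_const_nhds.sub (rfE_tendsto hs0 hs1)
  have := tendsto_nhds_unique h1 h2
  rw [← this]
  exact hsum.hasSum

lemma hasSum_rfB1 {s : ℝ} (hs0 : 0 < s) (hs1 : s < 1) :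
    HasSum (fun n => rfB s (n + 1)) (rfE s 1) := by
  refine (hasSum_nat_add_iff 1).2 ?_
  have : rfE s 1 + ∑ i ∈ Finset.range 1, rfB s i = rfE s 0 := by
    simp [rfB]
  rw [this]
  exact hasSum_rfB hs0 hs1

lemma hasSum_rfB2 {s : ℝ} (hs0 : 0 < s) (hs1 : s < 1) :
    HasSum (fun n => rfB s (n + 2)) (rfE s 2) := by
  refine (hasSum_nat_add_iff 2).2 ?_
  have : rfE s 2 + ∑ i ∈ Finset.range 2, rfB s i = rfE s 0 := by
    simp [Finset.sum_range_succ, rfB]; ring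
  rw [this]
  exact hasSum_rfB hs0 hs1

set_option maxHeartbeats 1000000 in
theorem riesz_feller_weights_sum_zero_sub_one (α θ lam cL cR : ℝ)
    (hα0 : 0 < α) (hα1 : α < 1) (hθ : |θ| ≤ α)
    (hlam : lam = α - |θ|)
    (hcL : cL = Real.sin ((α - θ) * π / 2) / Real.sin (α * π))
    (hcR : cR = Real.sin ((α + θ) * π / 2) / Real.sin (α * π))
    (w : ℤ → ℝ)
    (hw : ∀ k : ℤ, w k =
      -1 / (2 * Real.Gamma (2 - α)) *
        (if k ≤ -2 then
          ((|(k : ℝ)| + 2) ^ (1 - α) * lam + (|(k : ℝ)| + 1) ^ (1 - α) * (2 - 3 * lam)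
            + |(k : ℝ)| ^ (1 - α) * (3 * lam - 4)
            + (|(k : ℝ)| - 1) ^ (1 - α) * (2 - lam)) * cL
        else if k = -1 then
          ((3 : ℝ) ^ (1 - α) * lam + (2 : ℝ) ^ (1 - α) * (2 - 3 * lam) + 3 * lam - 4) * cL
            + lam * cR
        else if k = 0 then
          ((2 : ℝ) ^ (1 - α) * lam - 3 * lam + 2) * (cL + cR)
        else if k = 1 then
          ((3 : ℝ) ^ (1 - α) * lam + (2 : ℝ) ^ (1 - α) * (2 - 3 * lam) + 3 * lam - 4) * cR
            + lam * cL
        else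
          ((|(k : ℝ)| + 2) ^ (1 - α) * lam + (|(k : ℝ)| + 1) ^ (1 - α) * (2 - 3 * lam)
            + |(k : ℝ)| ^ (1 - α) * (3 * lam - 4)
            + (|(k : ℝ)| - 1) ^ (1 - α) * (2 - lam)) * cR)) :
    Summable w ∧ ∑' k : ℤ, w k = 0 := by
  have hs0 : 0 < 1 - α := by linarith
  have hs1 : 1 - α < 1 := by linarith
  set s : ℝ := 1 - α with hsdef
  set C : ℝ := -1 / (2 * Real.Gamma (2 - α)) with hCdef
  have hB1 := hasSum_rfB1 hs0 hs1
  have hB2 := hasSum_rfB2 hs0 hs1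
  -- right tail
  have hFtail : HasSum (fun n : ℕ => w (↑(n + 2)))
      (C * cR * -(lam * rfE s 2 + (2 - lam) * rfE s 1)) := by
    have h := (((hB2.mul_left lam).add (hB1.mul_left (2 - lam))).neg).mul_left (C * cR)
    convert h using 1
    · rfl
    funext n
    have h1 : ¬((↑(n + 2) : ℤ) ≤ -2) := by omega
    have h2 : ((↑(n + 2) : ℤ)) ≠ -1 := by omega
    have h3 : ((↑(n + 2) : ℤ)) ≠ 0 := by omega
    have h4 : ((↑(n + 2) : ℤ)) ≠ 1 := by omega
    rw [hw, if_neg h1, if_neg h2, if_neg h3, if_neg h4]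
    have habs : |((↑(n + 2) : ℤ) : ℝ)| = (n : ℝ) + 2 := by
      have hc : ((↑(n + 2) : ℤ) : ℝ) = (n : ℝ) + 2 := by push_cast; ring
      rw [hc, abs_of_nonneg (by positivity)]
    rw [habs]
    simp only [rfB, rfE]
    push_cast
    ring_nf
  -- left tail
  have hGtail : HasSum (fun n : ℕ => w (-(↑(n + 1) + 1)))
      (C * cL * -(lam * rfE s 2 + (2 - lam) * rfE s 1)) := by
    have h := (((hB2.mul_left lam).add (hB1.mul_left (2 - lam))).neg).mul_left (C * cL)
    convert h using 1
    · rfl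
    funext n
    have h1 : ((-(↑(n + 1) + 1) : ℤ) ≤ -2) := by omega
    rw [hw, if_pos h1]
    have habs : |((-(↑(n + 1) + 1) : ℤ) : ℝ)| = (n : ℝ) + 2 := by
      have hc : ((-(↑(n + 1) + 1) : ℤ) : ℝ) = -((n : ℝ) + 2) := by push_cast; ring
      rw [hc, abs_neg, abs_of_nonneg (by positivity)]
    rw [habs]
    simp only [rfB, rfE]
    push_cast
    ring_nf
  have hF := (hasSum_nat_add_iff (f := fun n : ℕ => w ↑n) 2).1 hFtail
  have hG : HasSum (fun n : ℕ => w (-(↑n + 1)))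
      (C * cL * -(lam * rfE s 2 + (2 - lam) * rfE s 1) + ∑ i ∈ Finset.range 1, w (-(↑i + 1))) :=
    (hasSum_nat_add_iff 1).1 hGtail
  have htot := hF.of_nat_of_neg_add_one hG
  refine ⟨htot.summable, ?_⟩
  rw [htot.tsum_eq]
  simp only [Finset.sum_range_succ, Finset.sum_range_zero, Nat.cast_zero, Nat.cast_one,
    zero_add]
  rw [hw 0, hw 1, hw (-1)]
  norm_num [rfE, Real.one_rpow]
  ring
end

section
/- For 1 < α ≤ 2, θ with |θ| ≤ 2−α, λ_2 = 2 − (α + |θ|), the two-sided series of coefficients w_k(α,θ) (defined by w_k = −((k+2)^{2−α}(2−λ_2) + (k+1)^{2−α}(4λ_2−6) + k^{2−α}(6−6λ_2) + (k−1)^{2−α}(4λ_2−2) + (k−2)^{2−α}(−λ_2))·c_R/(2Γ(3−α)) for k ≥ 2, the mirrored formula with c_L for k ≤ −2, and the stated special values at k ∈ {−1,0,1}) is absolutely summable with total sum ∑_{k∈ℤ} w_k = 0. -/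
open Real

private lemma slope_anti {β : ℝ} (hβ0 : 0 < β) (hβ1 : β < 1) {x y : ℝ}
    (hx : 0 ≤ x) (hxy : x ≤ y) : (y+1)^β - y^β ≤ (x+1)^β - x^β := by
  have hcont : ContinuousOn (fun t : ℝ => (t+1)^β - t^β) (Set.Ici 0) := by
    apply ContinuousOn.sub
    · exact fun t ht => ((Real.continuousAt_rpow_const _ _ (Or.inr hβ0.le)).comp
        (by fun_prop)).continuousWithinAt
    · exact fun t ht => (Real.continuousAt_rpow_const _ _ (Or.inr hβ0.le)).continuousWithinAt
  have hderiv : ∀ t : ℝ, 0 < t →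
      HasDerivAt (fun t : ℝ => (t+1)^β - t^β) (β * (t+1)^(β-1) * 1 - β * t^(β-1)) t := by
    intro t ht
    exact ((Real.hasDerivAt_rpow_const (p := β) (Or.inl (by positivity))).comp t
      ((hasDerivAt_id t).add_const 1)).sub
      (Real.hasDerivAt_rpow_const (p := β) (Or.inl (ne_of_gt ht)))
  have hanti : AntitoneOn (fun t : ℝ => (t+1)^β - t^β) (Set.Ici 0) := by
    apply antitoneOn_of_deriv_nonpos (convex_Ici 0) hcont
    · intro t ht
      rw [interior_Ici] at ht
      exact ((hderiv t ht).differentiableAt).differentiableWithinAt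
    · intro t ht
      rw [interior_Ici] at ht
      rw [(hderiv t ht).deriv]
      have h1 : (t+1)^(β-1) ≤ t^(β-1) :=
        Real.rpow_le_rpow_of_nonpos ht (by linarith) (by linarith)
      nlinarith
  exact hanti hx (le_trans hx hxy) hxy

theorem riesz_feller_weights_sum_zero_super (α θ lam cL cR : ℝ)
    (hα1 : 1 < α) (hα2 : α ≤ 2) (hθ : |θ| ≤ 2 - α)
    (hlam : lam = 2 - (α + |θ|))
    (hcL : α < 2 → cL = Real.sin ((α - θ) * π / 2) / Real.sin (α * π))
    (hcR : α < 2 → cR = Real.sin ((α + θ) * π / 2) / Real.sin (α * π))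
    (hcL2 : α = 2 → cL = -1 / 2)
    (hcR2 : α = 2 → cR = -1 / 2)
    (w : ℤ → ℝ)
    (hw : ∀ k : ℤ, w k =
      -1 / (2 * Real.Gamma (3 - α)) *
        (if k ≤ -2 then
          ((|(k : ℝ)| + 2) ^ (2 - α) * (2 - lam) + (|(k : ℝ)| + 1) ^ (2 - α) * (4 * lam - 6)
            + |(k : ℝ)| ^ (2 - α) * (6 - 6 * lam)
            + (|(k : ℝ)| - 1) ^ (2 - α) * (4 * lam - 2)
            + (|(k : ℝ)| - 2) ^ (2 - α) * (-lam)) * cL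
        else if k = -1 then
          ((3 : ℝ) ^ (2 - α) * (2 - lam) + (2 : ℝ) ^ (2 - α) * (4 * lam - 6)
            - 6 * lam + 6) * cL + (2 - lam) * cR
        else if k = 0 then
          ((2 : ℝ) ^ (2 - α) * (2 - lam) + 4 * lam - 6) * (cL + cR)
        else if k = 1 then
          ((3 : ℝ) ^ (2 - α) * (2 - lam) + (2 : ℝ) ^ (2 - α) * (4 * lam - 6)
            - 6 * lam + 6) * cR + (2 - lam) * cL
        else
          ((|(k : ℝ)| + 2) ^ (2 - α) * (2 - lam) + (|(k : ℝ)| + 1) ^ (2 - α) * (4 * lam - 6)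
            + |(k : ℝ)| ^ (2 - α) * (6 - 6 * lam)
            + (|(k : ℝ)| - 1) ^ (2 - α) * (4 * lam - 2)
            + (|(k : ℝ)| - 2) ^ (2 - α) * (-lam)) * cR)) :
    Summable w ∧ ∑' k : ℤ, w k = 0 := by
  by_cases hα : α = 2
  · -- case α = 2 : the weights vanish outside {-1,0,1}
    subst hα
    have hθ0 : |θ| = 0 := le_antisymm (by linarith) (abs_nonneg θ)
    have hlam0 : lam = 0 := by rw [hlam, hθ0]; ring
    have hL := hcL2 rfl
    have hR := hcR2 rfl
    have h22 : (2:ℝ) - 2 = 0 := by norm_num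
    have hzero : ∀ k : ℤ, k ∉ ({-1, 0, 1} : Finset ℤ) → w k = 0 := by
      intro k hk
      simp only [Finset.mem_insert, Finset.mem_singleton] at hk
      push_neg at hk
      obtain ⟨h1, h2, h3⟩ := hk
      rw [hw k]
      by_cases hk2 : k ≤ -2
      · rw [if_pos hk2, hlam0]
        simp only [h22, Real.rpow_zero]
        ring
      · rw [if_neg hk2, if_neg h1, if_neg h2, if_neg h3, hlam0]
        simp only [h22, Real.rpow_zero]
        ring
    have hsummable : Summable w := summable_of_ne_finset_zero hzero
    refine ⟨hsummable, ?_⟩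
    rw [tsum_eq_sum hzero]
    rw [show ({-1, 0, 1} : Finset ℤ) = insert (-1) (insert 0 {1}) from rfl,
      Finset.sum_insert (by decide), Finset.sum_insert (by decide), Finset.sum_singleton]
    rw [hw (-1), hw 0, hw 1]
    rw [if_neg (by decide), if_pos rfl]
    rw [if_neg (by decide), if_neg (by decide), if_pos rfl]
    rw [if_neg (by decide), if_neg (by decide), if_neg (by decide), if_pos rfl]
    rw [hlam0, hL, hR]
    simp only [h22, Real.rpow_zero]
    ring
  · -- case α < 2
    have hα' : α < 2 := lt_of_le_of_ne hα2 hα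
    set β : ℝ := 2 - α with hβ
    have hβ0 : 0 < β := by rw [hβ]; linarith
    have hβ1 : β < 1 := by rw [hβ]; linarith
    set C : ℝ := -1 / (2 * Real.Gamma (3 - α)) with hC
    set E : ℕ → ℝ := fun m => ((m:ℝ)+1)^β - (m:ℝ)^β with hE
    set D : ℕ → ℝ := fun m => E (m+1) - E m with hD
    have hEanti : ∀ m n : ℕ, m ≤ n → E n ≤ E m := by
      intro m n h
      exact slope_anti hβ0 hβ1 (Nat.cast_nonneg m) (by exact_mod_cast h)
    have hEnonneg : ∀ m : ℕ, 0 ≤ E m := by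
      intro m
      have : ((m:ℝ))^β ≤ ((m:ℝ)+1)^β :=
        Real.rpow_le_rpow (Nat.cast_nonneg m) (by linarith) hβ0.le
      simp only [hE]
      linarith
    have hE0 : E 0 = 1 := by
      simp [hE, Real.zero_rpow hβ0.ne']
    have hE1 : E 1 = (2:ℝ)^β - 1 := by
      rw [hE]
      norm_num
    have hE2 : E 2 = (3:ℝ)^β - (2:ℝ)^β := by
      rw [hE]
      norm_num
    have hDnonpos : ∀ m : ℕ, D m ≤ 0 := by
      intro m
      have := hEanti m (m+1) (Nat.le_succ m)
      simp only [hD]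
      linarith
    have hDsumrange : ∀ N : ℕ, ∑ m ∈ Finset.range N, D m = E N - E 0 := by
      intro N
      induction N with
      | zero => simp
      | succ N ih =>
        rw [Finset.sum_range_succ, ih]
        simp only [hD]
        ring
    have hsumD : Summable D := by
      have h1 : Summable (fun m => -D m) := by
        apply summable_of_sum_range_le (c := 1) (fun m => neg_nonneg.2 (hDnonpos m))
        intro N
        rw [Finset.sum_neg_distrib, hDsumrange N, hE0]
        have := hEnonneg N
        linarith
      simpa using h1.neg
    have hEsumrange : ∀ N : ℕ, ∑ m ∈ Finset.range N, E m = ((N:ℝ))^β := by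
      intro N
      induction N with
      | zero => simp [Real.zero_rpow hβ0.ne']
      | succ N ih =>
        rw [Finset.sum_range_succ, ih]
        simp only [hE]
        push_cast
        ring
    have hEbound : ∀ N : ℕ, 1 ≤ N → E N ≤ ((N:ℝ))^(β-1) := by
      intro N hN
      have hNpos : (0:ℝ) < N := by exact_mod_cast hN
      have h1 : (N:ℝ) * E N ≤ ((N:ℝ))^β := by
        have h2 : (Finset.range N).card • E N ≤ ∑ m ∈ Finset.range N, E m :=
          Finset.card_nsmul_le_sum _ _ _ (fun m hm =>
            hEanti m N (le_of_lt (Finset.mem_range.mp hm)))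
        rw [Finset.card_range, nsmul_eq_mul, hEsumrange N] at h2
        exact h2
      rw [Real.rpow_sub hNpos, Real.rpow_one]
      rw [le_div_iff₀ hNpos]
      linarith [h1]
    have hEtendsto : Filter.Tendsto E Filter.atTop (nhds 0) := by
      have hub : Filter.Tendsto (fun N : ℕ => ((N:ℝ))^(β-1)) Filter.atTop (nhds 0) := by
        have h1 := (tendsto_rpow_neg_atTop (y := 1-β) (by linarith)).comp
          (tendsto_natCast_atTop_atTop (R := ℝ))
        have : (fun N : ℕ => ((N:ℝ))^(β-1)) = (fun x : ℝ => x ^ (-(1-β))) ∘ (fun N : ℕ => (N:ℝ)) := by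
          funext N
          simp [Function.comp]
        rw [this]
        exact h1
      apply tendsto_of_tendsto_of_tendsto_of_le_of_le' tendsto_const_nhds hub
      · exact Filter.Eventually.of_forall hEnonneg
      · filter_upwards [Filter.eventually_ge_atTop 1] with N hN using hEbound N hN
    have hDhasSum : HasSum D (-(E 0)) := by
      rw [hsumD.hasSum_iff_tendsto_nat]
      have heq : (fun N : ℕ => ∑ m ∈ Finset.range N, D m) = fun N => E N - E 0 :=
        funext hDsumrange
      rw [heq]
      simpa using hEtendsto.sub_const (E 0)
    have hD1 : HasSum (fun n : ℕ => D (n+1)) (-(E 1)) := by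
      rw [hasSum_nat_add_iff 1]
      convert hDhasSum using 1
      · rfl
      simp only [Finset.sum_range_one, hD]
      ring
    have hD2 : HasSum (fun n : ℕ => D (n+2)) (-(E 2)) := by
      rw [hasSum_nat_add_iff 2]
      convert hDhasSum using 1
      · rfl
      rw [show (2:ℕ) = 1+1 from rfl, Finset.sum_range_succ, Finset.sum_range_one]
      simp only [hD]
      ring
    -- pointwise identities
    have hwR : ∀ n : ℕ, w ((n:ℤ)+2)
        = (C * cR) * ((-lam) * D n + ((2*lam-2) * D (n+1) + (2-lam) * D (n+2))) := by
      intro n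
      rw [hw]
      rw [if_neg (by omega), if_neg (by omega), if_neg (by omega), if_neg (by omega)]
      have habs : |(((n:ℤ)+2 : ℤ) : ℝ)| = (n:ℝ) + 2 := by
        push_cast
        rw [abs_of_nonneg (by positivity)]
      rw [habs]
      simp only [hD, hE]
      push_cast
      rw [show (n:ℝ)+2+2 = (n:ℝ)+4 from by ring, show (n:ℝ)+2+1 = (n:ℝ)+3 from by ring,
          show (n:ℝ)+2-1 = (n:ℝ)+1 from by ring, show (n:ℝ)+2-2 = (n:ℝ) from by ring,
          show (n:ℝ)+1+1 = (n:ℝ)+2 from by ring, show (n:ℝ)+3+1 = (n:ℝ)+4 from by ring]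
      ring
    have hwL : ∀ n : ℕ, w (-((n:ℤ)+2))
        = (C * cL) * ((-lam) * D n + ((2*lam-2) * D (n+1) + (2-lam) * D (n+2))) := by
      intro n
      rw [hw]
      rw [if_pos (by omega)]
      have habs : |((-((n:ℤ)+2) : ℤ) : ℝ)| = (n:ℝ) + 2 := by
        push_cast
        rw [abs_neg, abs_of_nonneg (by positivity)]
      rw [habs]
      simp only [hD, hE]
      push_cast
      rw [show (n:ℝ)+2+2 = (n:ℝ)+4 from by ring, show (n:ℝ)+2+1 = (n:ℝ)+3 from by ring,
          show (n:ℝ)+2-1 = (n:ℝ)+1 from by ring, show (n:ℝ)+2-2 = (n:ℝ) from by ring,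
          show (n:ℝ)+1+1 = (n:ℝ)+2 from by ring, show (n:ℝ)+3+1 = (n:ℝ)+4 from by ring]
      ring
    have hRsum : HasSum (fun n : ℕ => w ((n:ℤ)+2))
        ((C * cR) * ((-lam) * (-(E 0)) + ((2*lam-2) * (-(E 1)) + (2-lam) * (-(E 2))))) := by
      have h := ((hDhasSum.mul_left (-lam)).add
        ((hD1.mul_left (2*lam-2)).add (hD2.mul_left (2-lam)))).mul_left (C * cR)
      have heq : (fun n : ℕ => w ((n:ℤ)+2))
          = fun n => (C * cR) * ((-lam) * D n + ((2*lam-2) * D (n+1) + (2-lam) * D (n+2))) :=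
        funext hwR
      rw [heq]
      exact h
    have hLsum : HasSum (fun n : ℕ => w (-((n:ℤ)+2)))
        ((C * cL) * ((-lam) * (-(E 0)) + ((2*lam-2) * (-(E 1)) + (2-lam) * (-(E 2))))) := by
      have h := ((hDhasSum.mul_left (-lam)).add
        ((hD1.mul_left (2*lam-2)).add (hD2.mul_left (2-lam)))).mul_left (C * cL)
      have heq : (fun n : ℕ => w (-((n:ℤ)+2)))
          = fun n => (C * cL) * ((-lam) * D n + ((2*lam-2) * D (n+1) + (2-lam) * D (n+2))) :=
        funext hwL
      rw [heq]
      exact h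
    have hpos : HasSum (fun n : ℕ => w n)
        (((C * cR) * ((-lam) * (-(E 0)) + ((2*lam-2) * (-(E 1)) + (2-lam) * (-(E 2)))))
          + (w 0 + w 1)) := by
      have h0 : HasSum (fun n : ℕ => w ((n + 2 : ℕ)))
          ((C * cR) * ((-lam) * (-(E 0)) + ((2*lam-2) * (-(E 1)) + (2-lam) * (-(E 2))))) := by
        convert hRsum using 2 with n
        exact congrArg w (by push_cast; ring)
      have h3 := (hasSum_nat_add_iff (f := fun n : ℕ => w n) 2).mp h0
      rw [show (2:ℕ) = 1+1 from rfl, Finset.sum_range_succ, Finset.sum_range_one] at h3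
      norm_num at h3 ⊢
      convert h3 using 2
    have hneg : HasSum (fun n : ℕ => w (-((n:ℤ)+1)))
        (((C * cL) * ((-lam) * (-(E 0)) + ((2*lam-2) * (-(E 1)) + (2-lam) * (-(E 2)))))
          + w (-1)) := by
      have h0 : HasSum (fun n : ℕ => (fun m : ℕ => w (-((m:ℤ)+1))) (n + 1))
          ((C * cL) * ((-lam) * (-(E 0)) + ((2*lam-2) * (-(E 1)) + (2-lam) * (-(E 2))))) := by
        convert hLsum using 2 with n
        exact congrArg w (by push_cast; ring)
      have h3 := (hasSum_nat_add_iff (f := fun n : ℕ => w (-((n:ℤ)+1))) 1).mp h0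
      rw [Finset.sum_range_one] at h3
      norm_num at h3 ⊢
      convert h3 using 2
    have htot := hpos.of_nat_of_neg_add_one hneg
    refine ⟨htot.summable, ?_⟩
    rw [htot.tsum_eq]
    have hw0 : w 0 = C * (((2:ℝ)^β * (2-lam) + 4*lam - 6) * (cL + cR)) := by
      rw [hw 0, if_neg (by decide), if_neg (by decide), if_pos rfl]
    have hw1 : w 1 = C * (((3:ℝ)^β * (2-lam) + (2:ℝ)^β * (4*lam-6) - 6*lam + 6) * cR
        + (2-lam) * cL) := by
      rw [hw 1, if_neg (by decide), if_neg (by decide), if_neg (by decide), if_pos rfl]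
    have hwm1 : w (-1) = C * (((3:ℝ)^β * (2-lam) + (2:ℝ)^β * (4*lam-6) - 6*lam + 6) * cL
        + (2-lam) * cR) := by
      rw [hw (-1), if_neg (by decide), if_pos rfl]
    rw [hw0, hw1, hwm1, hE0, hE1, hE2]
    ring
end

section
/- For 1 < α ≤ 2 and each j ≥ 1, the tail sum over k from j+1 to ∞ of −((k+2)^{2−α}(2−λ_2) + (k+1)^{2−α}(4λ_2−6) + k^{2−α}(6−6λ_2) + (k−1)^{2−α}(4λ_2−2) + (k−2)^{2−α}(−λ_2))/(2Γ(3−α)) converges and equals r̃̃_j = ((j+2)^{2−α}(2−λ_2) + (j+1)^{2−α}(3λ_2−4) + j^{2−α}(2−3λ_2) + (j−1)^{2−α}λ_2)/(2Γ(3−α)). -/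
open Real

theorem boundary_tail_sum_super (α lam : ℝ) (hα1 : 1 < α) (hα2 : α ≤ 2)
    (hl0 : 0 ≤ lam) (hl1 : lam ≤ 1) (j : ℕ) (hj : 1 ≤ j)
    (a : ℕ → ℝ)
    (ha : ∀ k : ℕ, a k =
      -(((k : ℝ) + 2) ^ (2 - α) * (2 - lam) + ((k : ℝ) + 1) ^ (2 - α) * (4 * lam - 6)
        + (k : ℝ) ^ (2 - α) * (6 - 6 * lam) + ((k : ℝ) - 1) ^ (2 - α) * (4 * lam - 2)
        + ((k : ℝ) - 2) ^ (2 - α) * (-lam)) / (2 * Real.Gamma (3 - α))) :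
    Summable (fun n : ℕ => a (j + 1 + n)) ∧
    ∑' n : ℕ, a (j + 1 + n) =
      (((j : ℝ) + 2) ^ (2 - α) * (2 - lam) + ((j : ℝ) + 1) ^ (2 - α) * (3 * lam - 4)
        + (j : ℝ) ^ (2 - α) * (2 - 3 * lam) + ((j : ℝ) - 1) ^ (2 - α) * lam)
        / (2 * Real.Gamma (3 - α)) := by
  have hβ0 : (0:ℝ) ≤ 2 - α := by linarith
  have hβ1 : 2 - α < 1 := by linarith
  set β : ℝ := 2 - α with hβdef
  set c : ℝ := 2 * Real.Gamma (3 - α) with hcdef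
  set g : ℕ → ℝ := fun m => (m : ℝ) ^ β - ((m : ℝ) - 1) ^ β with hgdef
  -- g tends to 0
  have hg0 : Filter.Tendsto g Filter.atTop (nhds 0) := by
    rw [hgdef]
    have hupper : Filter.Tendsto (fun m : ℕ => β * ((m : ℝ) - 1) ^ (β - 1))
        Filter.atTop (nhds 0) := by
      have h1 : Filter.Tendsto (fun m : ℕ => (m : ℝ) - 1) Filter.atTop Filter.atTop := by
        have := Filter.tendsto_atTop_add_const_right Filter.atTop (-1 : ℝ)
          tendsto_natCast_atTop_atTop
        simpa [sub_eq_add_neg] using this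
      have h2 : Filter.Tendsto (fun x : ℝ => x ^ (β - 1)) Filter.atTop (nhds 0) := by
        have := tendsto_rpow_neg_atTop (y := 1 - β) (by linarith)
        simpa [neg_sub] using this
      simpa using (h2.comp h1).const_mul β
    apply tendsto_of_tendsto_of_tendsto_of_le_of_le' tendsto_const_nhds hupper
    · filter_upwards [Filter.eventually_ge_atTop 1] with m hm
      have h0 : (0:ℝ) ≤ (m:ℝ) - 1 := by
        have : (1:ℝ) ≤ (m:ℝ) := by exact_mod_cast hm
        linarith
      have := Real.rpow_le_rpow h0 (by linarith : (m:ℝ) - 1 ≤ (m:ℝ)) hβ0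
      linarith
    · filter_upwards [Filter.eventually_ge_atTop 2] with m hm
      have hx1 : (1:ℝ) ≤ (m:ℝ) - 1 := by
        have : (2:ℝ) ≤ (m:ℝ) := by exact_mod_cast hm
        linarith
      set x : ℝ := (m:ℝ) - 1 with hxdef
      have hx0 : 0 < x := by linarith
      have hbern : (1 + 1/x) ^ β ≤ 1 + β * (1/x) :=
        rpow_one_add_le_one_add_mul_self
          (by have h := one_div_nonneg.mpr hx0.le; linarith) hβ0 hβ1.le
      have hsplit : (m:ℝ) ^ β = x ^ β * (1 + 1/x) ^ β := by
        rw [← Real.mul_rpow (le_of_lt hx0) (by positivity)]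
        congr 1
        field_simp
        linarith
      have hxb : (0:ℝ) ≤ x ^ β := Real.rpow_nonneg hx0.le β
      have hpow : x ^ β * (1/x) = x ^ (β - 1) := by
        rw [show β - 1 = β + (-1) by ring, Real.rpow_add hx0, Real.rpow_neg_one, one_div]
      calc (m:ℝ) ^ β - x ^ β = x ^ β * (1 + 1/x) ^ β - x ^ β := by rw [hsplit]
        _ ≤ x ^ β * (1 + β * (1/x)) - x ^ β := by nlinarith
        _ = β * (x ^ β * (1/x)) := by ring
        _ = β * x ^ (β - 1) := by rw [hpow]
  -- g is nonnegative for m ≥ 1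
  have hgnn : ∀ m : ℕ, 1 ≤ m → 0 ≤ g m := by
    intro m hm
    simp only [hgdef]
    have h0 : (0:ℝ) ≤ (m:ℝ) - 1 := by
      have : (1:ℝ) ≤ (m:ℝ) := by exact_mod_cast hm
      linarith
    have := Real.rpow_le_rpow h0 (by linarith : (m:ℝ) - 1 ≤ (m:ℝ)) hβ0
    linarith
  -- g is antitone (from concavity)
  have hgmono : ∀ m : ℕ, 1 ≤ m → g (m + 1) ≤ g m := by
    intro m hm
    simp only [hgdef]
    push_cast
    have e : ((m:ℝ) + 1 - 1) = (m:ℝ) := by ring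
    rw [e]
    have hc := Real.concaveOn_rpow hβ0 hβ1.le
    have h1 : ((m:ℝ) - 1) ∈ Set.Ici (0:ℝ) := by
      simp only [Set.mem_Ici]
      have : (1:ℝ) ≤ (m:ℝ) := by exact_mod_cast hm
      linarith
    have h2 : ((m:ℝ) + 1) ∈ Set.Ici (0:ℝ) := by
      simp only [Set.mem_Ici]; positivity
    have hcc := hc.2 h1 h2 (by norm_num : (0:ℝ) ≤ 1/2) (by norm_num : (0:ℝ) ≤ 1/2) (by norm_num)
    simp only [smul_eq_mul] at hcc
    have harg : (1/2 : ℝ) * ((m:ℝ) - 1) + (1/2) * ((m:ℝ) + 1) = (m:ℝ) := by ring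
    rw [harg] at hcc
    linarith
  -- summability of telescoping building blocks
  have hsum : ∀ s : ℕ, 1 ≤ s → Summable (fun n : ℕ => g (s + n) - g (s + (n + 1))) := by
    intro s hs
    apply summable_of_sum_range_le (c := g s)
    · intro n
      rw [← Nat.add_assoc]
      have := hgmono (s + n) (le_trans hs (Nat.le_add_right s n))
      linarith
    · intro N
      rw [Finset.sum_range_sub' (fun i => g (s + i)) N]
      simp only [Nat.add_zero]
      have := hgnn (s + N) (le_trans hs (Nat.le_add_right s N))
      linarith
  -- key pointwise identity
  have key : ∀ n : ℕ, a (j + 1 + n) =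
      ((2 - lam) * (g (j + 2 + n) - g (j + 2 + (n + 1)))
        + (2 * lam - 2) * (g (j + 1 + n) - g (j + 1 + (n + 1)))
        + (-lam) * (g (j + n) - g (j + (n + 1)))) / c := by
    intro n
    rw [ha]
    simp only [hgdef]
    push_cast
    ring_nf
  have hsummable : Summable (fun n : ℕ => a (j + 1 + n)) := by
    have hS := ((((hsum (j + 2) (by omega)).mul_left (2 - lam)).add
        ((hsum (j + 1) (by omega)).mul_left (2 * lam - 2))).add
        ((hsum j hj).mul_left (-lam))).div_const c
    exact hS.congr (fun n => (key n).symm)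
  refine ⟨hsummable, ?_⟩
  set r : ℕ → ℝ := fun m => (((m:ℝ) + 2) ^ β * (2 - lam) + ((m:ℝ) + 1) ^ β * (3 * lam - 4)
      + (m:ℝ) ^ β * (2 - 3 * lam) + ((m:ℝ) - 1) ^ β * lam) / c with hrdef
  have hps : ∀ N : ℕ, ∑ n ∈ Finset.range N, a (j + 1 + n) = r j - r (j + N) := by
    intro N
    have htel := Finset.sum_range_sub' (fun i => r (j + i)) N
    simp only [Nat.add_zero] at htel
    rw [← htel]
    apply Finset.sum_congr rfl
    intro n _
    rw [ha]
    simp only [hrdef]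
    push_cast
    ring_nf
  have hr0 : Filter.Tendsto (fun m : ℕ => r m) Filter.atTop (nhds 0) := by
    have hg2 : Filter.Tendsto (fun m : ℕ => g (m + 1)) Filter.atTop (nhds 0) :=
      hg0.comp (Filter.tendsto_add_atTop_nat 1)
    have hg3 : Filter.Tendsto (fun m : ℕ => g (m + 2)) Filter.atTop (nhds 0) :=
      hg0.comp (Filter.tendsto_add_atTop_nat 2)
    have hcomb : Filter.Tendsto
        (fun m : ℕ => ((2 - lam) * g (m + 2) + (2 * lam - 2) * g (m + 1) + (-lam) * g m) / c)
        Filter.atTop (nhds 0) := by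
      have := (((hg3.const_mul (2 - lam)).add (hg2.const_mul (2 * lam - 2))).add
        (hg0.const_mul (-lam))).div_const c
      simpa using this
    refine hcomb.congr ?_
    intro m
    simp only [hgdef, hrdef]
    push_cast
    ring_nf
  have h1 : Filter.Tendsto (fun N : ℕ => ∑ n ∈ Finset.range N, a (j + 1 + n))
      Filter.atTop (nhds (r j)) := by
    have h2 : Filter.Tendsto (fun N : ℕ => r (j + N)) Filter.atTop (nhds 0) := by
      have := hr0.comp (Filter.tendsto_add_atTop_nat j)
      refine this.congr ?_
      intro N
      simp [Nat.add_comm]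
    have h3 : Filter.Tendsto (fun N : ℕ => r j - r (j + N)) Filter.atTop (nhds (r j - 0)) :=
      tendsto_const_nhds.sub h2
    rw [sub_zero] at h3
    exact h3.congr (fun N => (hps N).symm)
  have htsum : ∑' n : ℕ, a (j + 1 + n) = r j :=
    tendsto_nhds_unique hsummable.hasSum.tendsto_sum_nat h1
  rw [htsum, hrdef]
end

section
/- For 0 < α < 1 and λ_1 ∈ [0,1], the tail coefficients of the discretized Riesz–Feller operator are nonnegative: for every k ≥ 2, the quantity −((k+2)^{1−α}λ_1 + (k+1)^{1−α}(2−3λ_1) + k^{1−α}(3λ_1−4) + (k−1)^{1−α}(2−λ_1)) ≥ 0. -/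
open Real

lemma second_diff_rpow_nonpos {β x : ℝ} (hβ0 : 0 ≤ β) (hβ1 : β ≤ 1) (hx : 1 ≤ x) :
    (x + 1) ^ β + (x - 1) ^ β ≤ 2 * x ^ β := by
  have hc := Real.concaveOn_rpow hβ0 hβ1
  have h := hc.2 (Set.mem_Ici.2 (by linarith : (0:ℝ) ≤ x - 1))
    (Set.mem_Ici.2 (by linarith : (0:ℝ) ≤ x + 1))
    (by norm_num : (0:ℝ) ≤ 1/2) (by norm_num : (0:ℝ) ≤ 1/2) (by norm_num)
  simp only [smul_eq_mul] at h
  have hx' : (1/2 : ℝ) * (x - 1) + (1/2 : ℝ) * (x + 1) = x := by ring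
  rw [hx'] at h
  linarith

theorem riesz_feller_tail_weights_nonneg (α lam : ℝ) (hα0 : 0 < α) (hα1 : α < 1)
    (hl0 : 0 ≤ lam) (hl1 : lam ≤ 1) (k : ℕ) (hk : 2 ≤ k) :
    0 ≤ -(((k : ℝ) + 2) ^ (1 - α) * lam + ((k : ℝ) + 1) ^ (1 - α) * (2 - 3 * lam)
        + (k : ℝ) ^ (1 - α) * (3 * lam - 4) + ((k : ℝ) - 1) ^ (1 - α) * (2 - lam)) := by
  have hβ0 : (0:ℝ) ≤ 1 - α := by linarith
  have hβ1 : (1:ℝ) - α ≤ 1 := by linarith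
  have hk1 : (1:ℝ) ≤ (k:ℝ) := by exact_mod_cast Nat.one_le_of_lt hk
  have h1 := second_diff_rpow_nonpos hβ0 hβ1 (by linarith : (1:ℝ) ≤ (k:ℝ) + 1)
  have h2 := second_diff_rpow_nonpos hβ0 hβ1 hk1
  have e1 : ((k:ℝ) + 1 + 1) = (k:ℝ) + 2 := by ring
  have e2 : ((k:ℝ) + 1 - 1) = (k:ℝ) := by ring
  rw [e1, e2] at h1
  nlinarith [h1, h2, hl0, hl1]
end
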